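/- arXiv:2511.18883 — 8 statements merged into one kernel-verified Lean document; each statement's English description precedes it below -/
import Mathlib

section
/- Let n be a finite type and A : Matrix n n ℝ a Metzler matrix with all diagonal entries strictly negative. If A is autocatalytic and A is not irreducible, then there exists a subset S of n, nonempty and different from all of n, such that the principal submatrix A[S] is an irreducible autocatalytic Metzler matrix. -/
/-- A real matrix is *autocatalytic* if there is a strictly positive vector `v`
with `A · v` entrywise strictly positive, and every column has a strictly
negative and a strictly positive entry. -/
def IsAutocatalytic {n m : Type*} [Fintype m] (A : Matrix n m ℝ) : Prop :=
  (∃ v : m → ℝ, (∀ j, 0 < v j) ∧ ∀ i, 0 < A.mulVec v i) ∧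
  ∀ j : m, (∃ x, A x j < 0) ∧ (∃ y, 0 < A y j)

/-- A square real matrix is *Metzler* if all off-diagonal entries are nonnegative. -/
def IsMetzler {n : Type*} (A : Matrix n n ℝ) : Prop :=
  ∀ i j, i ≠ j → 0 ≤ A i j

/-- A square real matrix is *irreducible* if there is no nonempty proper subset `S`
of indices with `A i j = 0` for all `i ∈ S`, `j ∉ S`. -/
def MatIrreducible {n : Type*} (A : Matrix n n ℝ) : Prop :=
  ¬ ∃ S : Set n, S.Nonempty ∧ S ≠ Set.univ ∧ ∀ i ∈ S, ∀ j ∉ S, A i j = 0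

/-!
Call `S` closed if `A i j = 0` for `i ∈ S`, `j ∉ S`, and take `S` minimal under inclusion
among the nonempty closed sets; it is proper because `A` is reducible. A closed subset of
`A[S]` is a closed subset of `A`, so `A[S]` is irreducible by minimality. Since the rows in
`S` vanish outside `S`, `A[S]` maps the restriction of the positive vector `v` to the
restriction of `A v`, which is positive. Every column of `A[S]` has a negative diagonal
entry. It also has a positive entry: if `A[S]` has size at least two, because otherwise
the complement of the column index would be closed (`A[S]` is Metzler); and size one is
impossible, as then `A[S] v` would be negative.
-/

section

variable {n m : Type*} {A : Matrix n n ℝ} {B : Matrix m m ℝ} {S : Finset n}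

def IsClosedBlock (A : Matrix n n ℝ) (S : Set n) : Prop :=
  ∀ i ∈ S, ∀ j ∉ S, A i j = 0

theorem matIrreducible_iff :
    MatIrreducible A ↔ ∀ S : Set n, S.Nonempty → IsClosedBlock A S → S = Set.univ := by
  simp only [MatIrreducible, IsClosedBlock, not_exists, not_and, not_imp_not]

theorem IsMetzler.submatrix (hA : IsMetzler A) {f : m → n} (hf : f.Injective) :
    IsMetzler (A.submatrix f f) :=
  fun _ _ hij => hA _ _ (hf.ne hij)

theorem exists_pos_of_matIrreducible [Nontrivial m] (hB : MatIrreducible B)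
    (hM : IsMetzler B) (j : m) : ∃ i, 0 < B i j := by
  by_contra! h
  have hclosed : IsClosedBlock B {j}ᶜ := by
    intro i hi k hk
    rw [Set.notMem_compl_iff, Set.mem_singleton_iff] at hk
    subst hk
    exact le_antisymm (h i) (hM i k hi)
  obtain ⟨i, hij⟩ := exists_ne j
  have huniv := matIrreducible_iff.1 hB _ ⟨i, hij⟩ hclosed
  exact (huniv ▸ Set.mem_univ j : j ∈ ({j}ᶜ : Set m)) rfl

theorem isAutocatalytic_of_matIrreducible [Fintype m] (hB : MatIrreducible B)
    (hM : IsMetzler B) (hdiag : ∀ i, B i i < 0) {v : m → ℝ}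
    (hv : ∀ j, 0 < v j) (hBv : ∀ i, 0 < B.mulVec v i) : IsAutocatalytic B := by
  refine ⟨⟨v, hv, hBv⟩, fun j => ⟨⟨j, hdiag j⟩, ?_⟩⟩
  rcases subsingleton_or_nontrivial m with hm | hm
  · have hBvj : B.mulVec v j = B j j * v j := by
      simp only [Matrix.mulVec, dotProduct, Fintype.sum_subsingleton _ j]
    exact absurd (hBv j) (hBvj ▸ (mul_neg_of_neg_of_pos (hdiag j) (hv j)).not_gt)
  · exact exists_pos_of_matIrreducible hB hM j

theorem IsClosedBlock.mulVec_submatrix [Fintype n] (hS : IsClosedBlock A S) (v : n → ℝ)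
    (i : S) :
    (A.submatrix (fun i : S => (i : n)) (fun j : S => (j : n))).mulVec (fun j => v j) i =
      A.mulVec v i := by
  simp only [Matrix.mulVec, dotProduct, Matrix.submatrix_apply]
  rw [Finset.sum_coe_sort S (fun j => A i j * v j)]
  exact Finset.sum_subset (Finset.subset_univ S) fun j _ hj => by
    simp only [hS i i.2 j (Finset.mem_coe.not.2 hj), zero_mul]

theorem IsClosedBlock.image_val (hS : IsClosedBlock A S) {T : Set S}
    (hT : IsClosedBlock (A.submatrix (fun i : S => (i : n)) (fun j : S => (j : n))) T) :
    IsClosedBlock A (Subtype.val '' T) := by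
  rintro _ ⟨i, hi, rfl⟩ j hj
  by_cases hjS : j ∈ S
  · exact hT i hi ⟨j, hjS⟩ fun hjT => hj ⟨_, hjT, rfl⟩
  · exact hS i i.2 j hjS

theorem matIrreducible_submatrix_of_minimal
    (hS : Minimal (fun T : Set n => T.Nonempty ∧ IsClosedBlock A T) S) :
    MatIrreducible (A.submatrix (fun i : S => (i : n)) (fun j : S => (j : n))) := by
  refine matIrreducible_iff.2 fun T hTne hT => Set.eq_univ_of_forall fun i => ?_
  have himage : Subtype.val '' T = S :=
    hS.eq_of_le ⟨hTne.image _, hS.prop.2.image_val hT⟩ (Set.image_subset_iff.2 fun i _ => i.2)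
  obtain ⟨k, hk, hki⟩ := (himage ▸ i.2 : (i : n) ∈ Subtype.val '' T)
  exact Subtype.ext hki ▸ hk

theorem exists_minimal_isClosedBlock_of_not_matIrreducible [Fintype n]
    (hA : ¬ MatIrreducible A) : ∃ S : Finset n, S ≠ Finset.univ ∧
      Minimal (fun T : Set n => T.Nonempty ∧ IsClosedBlock A T) S := by
  obtain ⟨S₀, hne, hproper, hclosed⟩ := not_not.1 hA
  obtain ⟨S, hSS₀, hmin⟩ := exists_minimal_le_of_wellFoundedLT
    (fun T : Set n => T.Nonempty ∧ IsClosedBlock A T) S₀ ⟨hne, hclosed⟩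
  refine ⟨S.toFinite.toFinset, fun h => hproper (Set.eq_univ_of_univ_subset ?_), ?_⟩
  · simpa [← Finset.coe_univ, ← h] using hSS₀
  · simpa using hmin

end

/-- A reducible autocatalytic Metzler matrix with strictly negative diagonal contains a
proper nonempty principal submatrix which is an irreducible autocatalytic Metzler matrix. -/
theorem reducible_autocatalytic_metzler_has_irreducible_autocatalytic_block
    {n : Type*} [Fintype n] (A : Matrix n n ℝ)
    (hMetzler : IsMetzler A) (hdiag : ∀ i, A i i < 0)
    (hauto : IsAutocatalytic A) (hred : ¬ MatIrreducible A) :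
    ∃ S : Finset n, S.Nonempty ∧ S ≠ Finset.univ ∧
      MatIrreducible (A.submatrix (fun i : S => (i : n)) (fun j : S => (j : n))) ∧
      IsAutocatalytic (A.submatrix (fun i : S => (i : n)) (fun j : S => (j : n))) ∧
      IsMetzler (A.submatrix (fun i : S => (i : n)) (fun j : S => (j : n))) := by
  obtain ⟨⟨v, hv, hAv⟩, -⟩ := hauto
  obtain ⟨S, hproper, hmin⟩ := exists_minimal_isClosedBlock_of_not_matIrreducible hred
  have hirred := matIrreducible_submatrix_of_minimal hmin
  have hmetzler := hMetzler.submatrix (f := fun i : S => (i : n)) Subtype.val_injective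
  have hpos : ∀ i : S, 0 < (A.submatrix (fun i : S => (i : n)) (fun j : S => (j : n))).mulVec
      (fun j => v j) i := fun i => hmin.prop.2.mulVec_submatrix v i ▸ hAv i
  exact ⟨S, Finset.coe_nonempty.1 hmin.prop.1, hproper, hirred,
    isAutocatalytic_of_matIrreducible hirred hmetzler (fun i => hdiag i) (fun j => hv j) hpos,
    hmetzler⟩
end

section
/- Let n be a nonempty finite type and A : Matrix n n ℝ an irreducible autocatalytic Metzler matrix with all diagonal entries strictly negative, and suppose A is centralized. Then det A = (∏_{m} A m m) · (1 − ∑_{σ} ∏_{m ∈ support σ} (A m (σ m) / |A m m|)), where the sum ranges over all permutations σ of n that are cycles (Equiv.Perm.IsCycle) and the product is over the support of σ. -/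
/-- `A` is *centralized* if there is an index `m₀` such that every contributing
cycle `σ` (a cyclic permutation with nonzero product of selected entries)
satisfies `0 < A m₀ (σ m₀)`. -/
def IsCentralized {n : Type*} [Fintype n] [DecidableEq n] (A : Matrix n n ℝ) : Prop :=
  ∃ m₀ : n, ∀ σ : Equiv.Perm n, σ.IsCycle →
    (∏ m ∈ σ.support, A m (σ m)) ≠ 0 → 0 < A m₀ (σ m₀)

namespace Equiv.Perm

variable {α : Type*} [Fintype α] [DecidableEq α]

theorem eq_one_or_isCycle_of_forall_mem_support {σ : Perm α} (x : α)
    (h : ∀ c ∈ σ.cycleFactorsFinset, x ∈ c.support) : σ = 1 ∨ σ.IsCycle := by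
  have hsub : σ.cycleFactorsFinset ⊆ {σ.cycleOf x} := fun c hc =>
    Finset.mem_singleton.mpr (cycle_is_cycleOf (h c hc) hc)
  rcases Finset.subset_singleton_iff.mp hsub with hempty | hsingle
  · exact .inl (cycleFactorsFinset_eq_empty_iff.mp hempty)
  · exact .inr (cycleFactorsFinset_eq_singleton_iff.mp hsingle).1

end Equiv.Perm

namespace Matrix

open Equiv Finset

variable {n : Type*} [Fintype n] [DecidableEq n] {R : Type*} [CommRing R]

theorem prod_support_cycleFactor_ne_zero {A : Matrix n n R} {σ c : Perm n}
    (hσ : ∏ i, A i (σ i) ≠ 0) (hc : c ∈ σ.cycleFactorsFinset) :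
    ∏ m ∈ c.support, A m (c m) ≠ 0 := by
  rw [prod_congr rfl fun m hm => by rw [(Perm.mem_cycleFactorsFinset_iff.mp hc).2 m hm]]
  exact fun h0 => hσ (by rw [← prod_mul_prod_compl c.support, h0, zero_mul])

open scoped Classical in
theorem det_eq_prod_diag_add_sum_isCycle (A : Matrix n n R)
    (h : ∀ σ : Perm n, ∏ i, A i (σ i) ≠ 0 → σ = 1 ∨ σ.IsCycle) :
    A.det = ∏ i, A i i +
      ∑ σ ∈ univ.filter (fun σ : Perm n => σ.IsCycle), Perm.sign σ • ∏ i, A i (σ i) := by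
  have h1 : (1 : Perm n) ∉ univ.filter (fun σ : Perm n => σ.IsCycle) := by simp
  rw [← det_transpose, det_apply, ← sum_subset (subset_univ (insert 1 _)), sum_insert h1]
  · simp [transpose_apply]
  · intro σ _ hσ
    rw [mem_insert, mem_filter, not_or] at hσ
    have h0 : ∏ i, A i (σ i) = 0 := by
      by_contra h0
      exact (h σ h0).elim hσ.1 fun hc => hσ.2 ⟨mem_univ σ, hc⟩
    simp [transpose_apply, h0]

theorem prod_perm_eq_prod_diag_mul {K : Type*} [Field K] {A : Matrix n n K}
    (hA : ∀ i, A i i ≠ 0) (σ : Perm n) :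
    ∏ i, A i (σ i) = (∏ i, A i i) * ∏ m ∈ σ.support, A m (σ m) / A m m := by
  have hfix : ∀ m ∈ univ, m ∉ σ.support → A m (σ m) / A m m = 1 := fun m _ hm => by
    rw [Perm.notMem_support.mp hm, div_self (hA m)]
  rw [prod_subset (subset_univ _) hfix, ← prod_mul_distrib]
  exact prod_congr rfl fun m _ => (mul_div_cancel₀ _ (hA m)).symm

theorem sign_smul_prod_perm_of_isCycle {A : Matrix n n ℝ} (hA : ∀ i, A i i < 0)
    {σ : Perm n} (hσ : σ.IsCycle) :
    Perm.sign σ • ∏ i, A i (σ i) =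
      -((∏ i, A i i) * ∏ m ∈ σ.support, A m (σ m) / |A m m|) := by
  have habs : ∏ m ∈ σ.support, A m (σ m) / |A m m| =
      (-1) ^ #σ.support * ∏ m ∈ σ.support, A m (σ m) / A m m := by
    rw [← prod_const, ← prod_mul_distrib]
    refine prod_congr rfl fun m _ => ?_
    rw [abs_of_neg (hA m), div_neg, neg_one_mul]
  rw [prod_perm_eq_prod_diag_mul (fun i => (hA i).ne) σ, habs, hσ.sign, Units.smul_def]
  push_cast
  ring

end Matrix

theorem IsCentralized.eq_one_or_isCycle_of_prod_ne_zero {n : Type*} [Fintype n]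
    [DecidableEq n] {A : Matrix n n ℝ} (hcent : IsCentralized A) (hA : ∀ i, A i i ≤ 0)
    {σ : Equiv.Perm n} (hσ : ∏ i, A i (σ i) ≠ 0) : σ = 1 ∨ σ.IsCycle := by
  obtain ⟨m₀, hm₀⟩ := hcent
  refine σ.eq_one_or_isCycle_of_forall_mem_support m₀ fun c hc => ?_
  have hpos := hm₀ c (Equiv.Perm.mem_cycleFactorsFinset_iff.mp hc).1
    (Matrix.prod_support_cycleFactor_ne_zero hσ hc)
  refine Equiv.Perm.mem_support.mpr fun hfix => ?_
  rw [hfix] at hpos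
  exact (hA m₀).not_gt hpos

open scoped Classical in
theorem centralized_det_cycle_formula_general
    {n : Type*} [Fintype n] [DecidableEq n]
    (A : Matrix n n ℝ) (hdiag : ∀ i, A i i < 0)
    (hcent : IsCentralized A) :
    A.det = (∏ m, A m m) *
      (1 - ∑ σ ∈ Finset.univ.filter (fun σ : Equiv.Perm n => σ.IsCycle),
        ∏ m ∈ σ.support, A m (σ m) / |A m m|) := by
  have hterms (σ : Equiv.Perm n) : ∏ i, A i (σ i) ≠ 0 → σ = 1 ∨ σ.IsCycle :=
    hcent.eq_one_or_isCycle_of_prod_ne_zero fun i => (hdiag i).le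
  rw [A.det_eq_prod_diag_add_sum_isCycle hterms,
    Finset.sum_congr rfl fun σ hσ =>
      Matrix.sign_smul_prod_perm_of_isCycle hdiag (Finset.mem_filter.mp hσ).2,
    Finset.sum_neg_distrib, ← Finset.mul_sum]
  ring

open scoped Classical in
/-- For a centralized irreducible autocatalytic Metzler matrix with strictly negative
diagonal, the determinant is given by the cycle expansion
`det A = (∏ m, A m m) · (1 - ∑_{cycles σ} ∏_{m ∈ supp σ} A m (σ m) / |A m m|)`. -/
theorem centralized_det_cycle_formula
    {n : Type*} [Fintype n] [DecidableEq n] [Nonempty n]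
    (A : Matrix n n ℝ) (hMetzler : IsMetzler A) (hdiag : ∀ i, A i i < 0)
    (hirr : MatIrreducible A) (hauto : IsAutocatalytic A)
    (hcent : IsCentralized A) :
    A.det = (∏ m, A m m) *
      (1 - ∑ σ ∈ Finset.univ.filter (fun σ : Equiv.Perm n => σ.IsCycle),
        ∏ m ∈ σ.support, A m (σ m) / |A m m|) :=
  centralized_det_cycle_formula_general A hdiag hcent
end

section
/- Let n be a nonempty finite type with Fintype.card n = k, and let A : Matrix n n ℝ be an irreducible autocatalytic Metzler matrix with all diagonal entries strictly negative that is centralized, and suppose moreover that every entry of A lies in {−1, 0, 1}. Then det A · (−1)^k = 1 − N, where N is the number of permutations σ of n that are cycles (Equiv.Perm.IsCycle) with ∏_{m ∈ support σ} A m (σ m) ≠ 0. -/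
open Equiv Finset

namespace Equiv.Perm

variable {α : Type*} [Fintype α] [DecidableEq α]

theorem eq_one_or_isCycle_of_forall_mem_support_cycleFactors {σ : Perm α} {a : α}
    (h : ∀ τ ∈ σ.cycleFactorsFinset, a ∈ τ.support) : σ = 1 ∨ σ.IsCycle := by
  have hcard : #σ.cycleFactorsFinset ≤ 1 := by
    refine card_le_one.mpr fun τ₁ hτ₁ τ₂ hτ₂ => by_contra fun hne => ?_
    have hdisj := cycleFactorsFinset_pairwise_disjoint σ hτ₁ hτ₂ hne
    exact disjoint_left.mp hdisj.disjoint_support (h τ₁ hτ₁) (h τ₂ hτ₂)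
  rcases Nat.le_one_iff_eq_zero_or_eq_one.mp hcard with h0 | h1
  · exact .inl (cycleFactorsFinset_eq_empty_iff.mp (card_eq_zero.mp h0))
  · obtain ⟨τ, hτ⟩ := card_eq_one.mp h1
    exact .inr (cycleFactorsFinset_eq_singleton_iff.mp hτ).1

end Equiv.Perm

namespace Matrix

theorem diag_eq_neg_one_of_unit_entries {n : Type*} {A : Matrix n n ℝ}
    (hentries : ∀ i j, A i j = -1 ∨ A i j = 0 ∨ A i j = 1) (hdiag : ∀ i, A i i < 0) (i : n) :
    A i i = -1 := by
  rcases hentries i i with h | h | h <;> linarith [hdiag i]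

theorem apply_eq_one_of_unit_entries {n : Type*} {A : Matrix n n ℝ}
    (hentries : ∀ i j, A i j = -1 ∨ A i j = 0 ∨ A i j = 1) (hMetzler : IsMetzler A) {i j : n}
    (hij : i ≠ j) (h : A i j ≠ 0) : A i j = 1 := by
  rcases hentries i j with h' | h' | h'
  · linarith [hMetzler i j hij]
  · exact absurd h' h
  · exact h'

variable {n : Type*} [Fintype n] [DecidableEq n] {A : Matrix n n ℝ}

open scoped Classical in
noncomputable def contributingCycles (A : Matrix n n ℝ) : Finset (Perm n) :=
  univ.filter fun σ : Perm n => σ.IsCycle ∧ (∏ m ∈ σ.support, A m (σ m)) ≠ 0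

theorem mem_contributingCycles {σ : Perm n} :
    σ ∈ contributingCycles A ↔ σ.IsCycle ∧ ∏ m ∈ σ.support, A m (σ m) ≠ 0 := by
  classical
  simp [contributingCycles]

theorem det_eq_sum_sign_mul_prod {R : Type*} [CommRing R] (M : Matrix n n R) :
    M.det = ∑ σ : Perm n, (Perm.sign σ : R) * ∏ i, M i (σ i) := by
  rw [← det_transpose, det_apply']
  rfl

theorem prod_apply_eq_prod_support_mul_prod_diag {R : Type*} [CommMonoid R] (M : Matrix n n R)
    (σ : Perm n) :
    ∏ i, M i (σ i) = (∏ i ∈ σ.support, M i (σ i)) * ∏ i ∈ σ.supportᶜ, M i i := by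
  rw [← prod_mul_prod_compl σ.support]
  congr 1
  exact prod_congr rfl fun i hi => by rw [Perm.notMem_support.mp (mem_compl.mp hi)]

theorem eq_one_or_isCycle_of_prod_apply_ne_zero (hcent : IsCentralized A)
    (hdiag : ∀ i, A i i ≤ 0) {σ : Perm n} (hσ : ∏ i, A i (σ i) ≠ 0) : σ = 1 ∨ σ.IsCycle := by
  obtain ⟨m₀, hm₀⟩ := hcent
  refine Perm.eq_one_or_isCycle_of_forall_mem_support_cycleFactors (a := m₀) fun τ hτ => ?_
  obtain ⟨hcyc, hagree⟩ := Perm.mem_cycleFactorsFinset_iff.mp hτ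
  have hτσ : ∏ m ∈ τ.support, A m (τ m) ≠ 0 := by
    rw [prod_congr rfl fun m hm => by rw [hagree m hm]]
    exact prod_ne_zero_iff.mpr fun m _ => prod_ne_zero_iff.mp hσ m (mem_univ m)
  by_contra hm
  have hpos := hm₀ τ hcyc hτσ
  rw [Perm.notMem_support.mp hm] at hpos
  exact (hdiag m₀).not_gt hpos

theorem det_eq_sum_insert_one_contributingCycles (hcent : IsCentralized A)
    (hdiag : ∀ i, A i i ≤ 0) :
    A.det = ∑ σ ∈ insert 1 (contributingCycles A), (Perm.sign σ : ℝ) * ∏ i, A i (σ i) := by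
  rw [det_eq_sum_sign_mul_prod]
  refine (sum_subset (subset_univ _) fun σ _ hσ => by_contra fun hne => hσ ?_).symm
  have hprod : ∏ i, A i (σ i) ≠ 0 := right_ne_zero_of_mul hne
  rcases eq_one_or_isCycle_of_prod_apply_ne_zero hcent hdiag hprod with rfl | hcyc
  · exact mem_insert_self _ _
  · refine mem_insert_of_mem (mem_contributingCycles.mpr ⟨hcyc, ?_⟩)
    exact prod_ne_zero_iff.mpr fun i _ => prod_ne_zero_iff.mp hprod i (mem_univ i)

theorem one_notMem_contributingCycles : (1 : Perm n) ∉ contributingCycles A :=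
  fun h => (mem_contributingCycles.mp h).1.ne_one rfl

theorem sign_mul_prod_apply_one (hdiag : ∀ i, A i i = -1) :
    (Perm.sign (1 : Perm n) : ℝ) * ∏ i, A i ((1 : Perm n) i) = (-1) ^ Fintype.card n := by
  simp [hdiag]

theorem sign_mul_prod_apply_of_mem_contributingCycles (hdiag : ∀ i, A i i = -1)
    (hoff : ∀ {i j}, i ≠ j → A i j ≠ 0 → A i j = 1) {σ : Perm n}
    (hσ : σ ∈ contributingCycles A) :
    (Perm.sign σ : ℝ) * ∏ i, A i (σ i) = -(-1) ^ Fintype.card n := by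
  obtain ⟨hcyc, hprod⟩ := mem_contributingCycles.mp hσ
  have hsupport : ∏ i ∈ σ.support, A i (σ i) = 1 := prod_eq_one fun i hi =>
    hoff (Perm.mem_support.mp hi).symm (prod_ne_zero_iff.mp hprod i hi)
  rw [prod_apply_eq_prod_support_mul_prod_diag, hsupport, prod_congr rfl fun i _ => hdiag i,
    prod_const, card_compl, hcyc.sign]
  push_cast
  rw [one_mul, neg_mul, ← pow_add, Nat.add_sub_cancel' (card_le_univ σ.support)]

end Matrix

open scoped Classical in
theorem centralized_unit_entries_det_count_cycles_general
    {n : Type*} [Fintype n] [DecidableEq n] {k : ℕ}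
    (hk : Fintype.card n = k)
    (A : Matrix n n ℝ) (hMetzler : IsMetzler A) (hdiag : ∀ i, A i i < 0)
    (hcent : IsCentralized A)
    (hentries : ∀ i j, A i j = -1 ∨ A i j = 0 ∨ A i j = 1) :
    A.det * (-1 : ℝ) ^ k =
      1 - ((Finset.univ.filter (fun σ : Equiv.Perm n =>
            σ.IsCycle ∧ (∏ m ∈ σ.support, A m (σ m)) ≠ 0)).card : ℝ) := by
  subst hk
  have hdiag₁ := Matrix.diag_eq_neg_one_of_unit_entries hentries hdiag
  rw [Matrix.det_eq_sum_insert_one_contributingCycles hcent fun i => (hdiag i).le,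
    sum_insert Matrix.one_notMem_contributingCycles, Matrix.sign_mul_prod_apply_one hdiag₁,
    sum_congr rfl fun σ hσ => Matrix.sign_mul_prod_apply_of_mem_contributingCycles hdiag₁
      (Matrix.apply_eq_one_of_unit_entries hentries hMetzler) hσ,
    sum_const, nsmul_eq_mul]
  have hsq : (-1 : ℝ) ^ Fintype.card n * (-1) ^ Fintype.card n = 1 := by
    rw [← mul_pow]; norm_num
  change _ = 1 - (#(Matrix.contributingCycles A) : ℝ)
  linear_combination (1 - (#(Matrix.contributingCycles A) : ℝ)) * hsq

open scoped Classical in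
/-- For a centralized irreducible autocatalytic Metzler matrix with strictly negative
diagonal whose entries all lie in `{-1, 0, 1}`, one has `det A · (-1)^k = 1 - N`,
where `N` is the number of contributing permutation cycles. -/
theorem centralized_unit_entries_det_count_cycles
    {n : Type*} [Fintype n] [DecidableEq n] [Nonempty n] {k : ℕ}
    (hk : Fintype.card n = k)
    (A : Matrix n n ℝ) (hMetzler : IsMetzler A) (hdiag : ∀ i, A i i < 0)
    (hirr : MatIrreducible A) (hauto : IsAutocatalytic A)
    (hcent : IsCentralized A)
    (hentries : ∀ i j, A i j = -1 ∨ A i j = 0 ∨ A i j = 1) :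
    A.det * (-1 : ℝ) ^ k =
      1 - ((Finset.univ.filter (fun σ : Equiv.Perm n =>
            σ.IsCycle ∧ (∏ m ∈ σ.support, A m (σ m)) ≠ 0)).card : ℝ) :=
  centralized_unit_entries_det_count_cycles_general hk A hMetzler hdiag hcent hentries
end

section
/- Let l, k be natural numbers with 0 < k < l, and let A : Matrix (Fin l) (Fin l) ℝ satisfy: (Metzler) 0 ≤ A i j for all i ≠ j; (ear diagonal) A j j < 0 for every j with k ≤ j.val; (ear chain) 0 < A j j' whenever k ≤ j.val, j.val + 1 < l and j'.val = j.val + 1; (return edge) 0 < A ⟨l−1⟩ ⟨0⟩; and (autocatalytic leading block) there exists w : Fin k → ℝ with all entries strictly positive such that for every i : Fin k, 0 < ∑_{j : Fin k} A (castLE i) (castLE j) · w j. Then there exists u : Fin l → ℝ with all entries strictly positive such that every entry of the matrix–vector product A·u is strictly positive. -/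
/-!
Put `u = t • w` on the leading block and `u j = r ^ (j - k)` along the ear. Since `A` is Metzler
and `u > 0`, each row of `A *ᵥ u` is bounded below by the sum over any set of columns containing
its diagonal. Block row `i` thus gets at least `t * (A* *ᵥ w) i > 0`; ear row `j < l - 1` gets at
least `r ^ (j - k) * (A j j + r * A j (j + 1))`, positive once `r` is large; and the last row
`q = l - 1` gets at least `A q q * r ^ (q - k) + t * A q 0 * w 0`, positive by the return edge
once `t` is large for the `r` already fixed.
-/

open Filter

namespace Matrix

def IsMetzler {n : Type*} (A : Matrix n n ℝ) : Prop :=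
  ∀ i j, i ≠ j → 0 ≤ A i j

namespace IsMetzler

variable {m n : Type*} [Fintype m] [Fintype n] {A : Matrix n n ℝ} {u : n → ℝ}

theorem sum_mul_le_mulVec (hA : A.IsMetzler) (hu : ∀ j, 0 ≤ u j) {i : n} {s : Finset n}
    (hi : i ∈ s) : ∑ j ∈ s, A i j * u j ≤ (A *ᵥ u) i :=
  Finset.sum_le_sum_of_subset_of_nonneg (Finset.subset_univ s) fun j _ hj =>
    mul_nonneg (hA i j (ne_of_mem_of_not_mem hi hj)) (hu j)

theorem mulVec_apply_pos_of_pair [DecidableEq n] (hA : A.IsMetzler) (hu : ∀ j, 0 ≤ u j)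
    {i j : n} (hij : i ≠ j) (h : 0 < A i i * u i + A i j * u j) : 0 < (A *ᵥ u) i :=
  (h.trans_eq (Finset.sum_pair (f := fun j => A i j * u j) hij).symm).trans_le
    (hA.sum_mul_le_mulVec hu (Finset.mem_insert_self i {j}))

theorem mulVec_apply_pos_of_embedding (hA : A.IsMetzler) (hu : ∀ j, 0 ≤ u j) (e : m ↪ n)
    {i : m} (h : 0 < ∑ j, A (e i) (e j) * u (e j)) : 0 < (A *ᵥ u) (e i) :=
  (h.trans_eq (Finset.sum_map Finset.univ e fun j => A (e i) j * u j).symm).trans_le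
    (hA.sum_mul_le_mulVec hu (Finset.mem_map_of_mem e (Finset.mem_univ i)))

end IsMetzler

end Matrix

theorem eventually_lt_mul_atTop {a b : ℝ} (hb : 0 < b) : ∀ᶠ r in atTop, a < r * b :=
  (tendsto_id.atTop_mul_const hb).eventually_gt_atTop a

theorem eventually_forall_lt_mul_atTop {ι : Type*} [Finite ι] {p : ι → Prop} {a b : ι → ℝ}
    (hb : ∀ i, p i → 0 < b i) : ∀ᶠ r in atTop, ∀ i, p i → a i < r * b i :=
  eventually_all.2 fun i =>
    eventually_imp_distrib_left.2 fun hi => eventually_lt_mul_atTop (hb i hi)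

def earVector (k : ℕ) {l : ℕ} (w : Fin k → ℝ) (t r : ℝ) (j : Fin l) : ℝ :=
  if h : (j : ℕ) < k then t * w ⟨j, h⟩ else r ^ ((j : ℕ) - k)

section earVector

variable {k l : ℕ} {w : Fin k → ℝ} {t r : ℝ}

theorem earVector_of_lt {j : Fin l} (h : (j : ℕ) < k) : earVector k w t r j = t * w ⟨j, h⟩ :=
  dif_pos h

theorem earVector_castLE (hkl : k ≤ l) (j : Fin k) :
    earVector k w t r (Fin.castLE hkl j) = t * w j :=
  earVector_of_lt j.isLt

theorem earVector_of_le {j : Fin l} (h : k ≤ (j : ℕ)) :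
    earVector k w t r j = r ^ ((j : ℕ) - k) :=
  dif_neg h.not_gt

theorem earVector_of_succ {j j' : Fin l} (hj : k ≤ (j : ℕ)) (hj' : (j' : ℕ) = j + 1) :
    earVector k w t r j' = earVector k w t r j * r := by
  rw [earVector_of_le hj, earVector_of_le (by omega), ← pow_succ]
  congr 1
  omega

theorem earVector_pos (hw : ∀ j, 0 < w j) (ht : 0 < t) (hr : 0 < r) (j : Fin l) :
    0 < earVector k w t r j := by
  unfold earVector
  split
  · exact mul_pos ht (hw _)
  · exact pow_pos hr _

end earVector

/-- Adding a single directed ear (a chain of indices `k, …, l-1` with strictly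
negative diagonal, strictly positive superdiagonal, and a positive return edge to
index `0`) to a leading block admitting a strictly positive vector with strictly
positive image preserves this property for the whole Metzler matrix. -/
theorem ear_extension_preserves_positive_image
    (l k : ℕ) (hk : 0 < k) (hkl : k < l)
    (A : Matrix (Fin l) (Fin l) ℝ)
    (hMetzler : ∀ i j : Fin l, i ≠ j → 0 ≤ A i j)
    (hEarChain : ∀ j j' : Fin l, k ≤ j.val → j.val + 1 < l → j'.val = j.val + 1 →
      0 < A j j')
    (hReturn : 0 < A ⟨l - 1, by omega⟩ ⟨0, by omega⟩)
    (hBlock : ∃ w : Fin k → ℝ, (∀ j, 0 < w j) ∧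
      ∀ i : Fin k, 0 < ∑ j : Fin k,
        A (Fin.castLE hkl.le i) (Fin.castLE hkl.le j) * w j) :
    ∃ u : Fin l → ℝ, (∀ i, 0 < u i) ∧ ∀ i, 0 < A.mulVec u i := by
  obtain ⟨w, hw, hwA⟩ := hBlock
  have hA : A.IsMetzler := hMetzler
  obtain ⟨r, hr, hrChain⟩ : ∃ r, 0 < r ∧ ∀ jj : Fin l × Fin l,
      k ≤ jj.1.val ∧ jj.2.val = jj.1.val + 1 → -A jj.1 jj.1 < r * A jj.1 jj.2 :=
    ((eventually_gt_atTop 0).and (eventually_forall_lt_mul_atTop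
      fun jj hjj => hEarChain jj.1 jj.2 hjj.1 (by omega) hjj.2)).exists
  set q : Fin l := ⟨l - 1, by omega⟩
  set z : Fin l := ⟨0, by omega⟩
  obtain ⟨t, ht, htReturn⟩ : ∃ t, 0 < t ∧
      -(A q q * r ^ (l - 1 - k)) < t * (A q z * w ⟨0, hk⟩) :=
    ((eventually_gt_atTop 0).and (eventually_lt_mul_atTop (mul_pos hReturn (hw _)))).exists
  have hu := earVector_pos (l := l) hw ht hr
  have hu₀ j : 0 ≤ earVector k w t r j := (hu j).le
  refine ⟨earVector k w t r, hu, fun i => ?_⟩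
  rcases lt_or_ge i.val k with hik | hik
  · obtain ⟨i, rfl⟩ : ∃ i₀ : Fin k, Fin.castLE hkl.le i₀ = i := ⟨⟨i, hik⟩, rfl⟩
    refine hA.mulVec_apply_pos_of_embedding hu₀ (Fin.castLEEmb hkl.le) ?_
    simp only [Fin.castLEEmb_apply, earVector_castLE, mul_left_comm _ t, ← Finset.mul_sum]
    exact mul_pos ht (hwA i)
  rcases lt_or_ge (i.val + 1) l with hil | hil
  · set i' : Fin l := ⟨i + 1, hil⟩
    refine hA.mulVec_apply_pos_of_pair hu₀ (j := i') (Fin.ne_of_val_ne (by simp [i'])) ?_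
    rw [earVector_of_succ (j' := i') hik rfl]
    calc 0 < earVector k w t r i * (A i i + r * A i i') :=
          mul_pos (hu i) (by linarith [hrChain (i, i') ⟨hik, rfl⟩])
      _ = _ := by ring
  · obtain rfl : i = q := Fin.ext (by simp [q]; omega)
    refine hA.mulVec_apply_pos_of_pair hu₀ (j := z) (Fin.ne_of_val_ne (by simp [z, q]; omega)) ?_
    rw [earVector_of_le hik, earVector_of_lt hk]
    linarith
end

section
/- Let n be a finite type, A : Matrix n n ℝ, and S a nonempty subset of n such that the principal submatrix A[S] is Hurwitz-unstable. Then A is D-unstable: there exists d : n → ℝ with all entries strictly positive such that the matrix A * Matrix.diagonal d is Hurwitz-unstable. -/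
/-!
Take `d_ε = 1` on `S` and `d_ε = ε` off `S`. With `P` the `n × S` inclusion matrix,
`A · D₀ = (A P) Pᵀ` and `Pᵀ (A P) = A[S]`, so the two characteristic polynomials agree up to
powers of `X`, and an unstable eigenvalue `z ≠ 0` of `A[S]` is one of `A · D₀`.
Hurwitz instability is an open condition: if a monic complex polynomial of degree `N` has no
root in the open right half-plane then `|p z| ≥ (Re z) ^ N` there, while `p z` depends
continuously on the matrix. Hence `A · D_ε` is Hurwitz-unstable for small `ε > 0`.
-/

/-- A square real matrix is *Hurwitz-unstable* if its characteristic polynomial,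
viewed over `ℂ`, has a root with strictly positive real part. -/
def HurwitzUnstable {n : Type*} [Fintype n] [DecidableEq n] (A : Matrix n n ℝ) : Prop :=
  ∃ z : ℂ, ((A.charpoly).map (algebraMap ℝ ℂ)).IsRoot z ∧ 0 < z.re

open Polynomial Matrix Filter Topology

theorem Polynomial.re_pow_natDegree_le_norm_eval {P : ℂ[X]} (hP : P.Monic)
    (hroots : ∀ r ∈ P.roots, r.re ≤ 0) {z : ℂ} (hz : 0 ≤ z.re) :
    z.re ^ P.natDegree ≤ ‖P.eval z‖ := by
  have hsplit : P.Splits := IsAlgClosed.splits P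
  have heval : P.eval z = (P.roots.map (z - ·)).prod := by
    conv_lhs => rw [hsplit.eq_prod_roots_of_monic hP]
    simp [eval_multiset_prod]
  rw [← splits_iff_card_roots.mp hsplit, heval, ← normHom_apply, map_multiset_prod,
    Multiset.map_map, ← Multiset.prod_replicate, ← Multiset.map_const']
  refine Multiset.prod_map_le_prod_map₀ _ _ (fun _ _ => hz) fun r hr => ?_
  calc z.re ≤ (z - r).re := by simpa using hroots r hr
    _ ≤ ‖z - r‖ := Complex.re_le_norm _

namespace Matrix

variable {m : Type*} [Fintype m] [DecidableEq m]

theorem X_pow_card_mul_charpoly_mul_diagonal_indicator {R : Type*} [CommRing R]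
    (A : Matrix m m R) (S : Finset m) :
    X ^ S.card * (A * diagonal fun i => if i ∈ S then 1 else 0).charpoly =
      X ^ Fintype.card m * (A.submatrix ((↑) : S → m) (↑)).charpoly := by
  convert charpoly_mul_comm' (A.submatrix id ((↑) : S → m)) ((1 : Matrix m m R).submatrix (↑) id)
    using 3
  · simp
  · ext i k
    simp only [mul_apply, submatrix_apply, id, one_apply, mul_ite, mul_one, mul_zero,
      diagonal_apply]
    rw [Finset.sum_ite_eq', Finset.sum_coe_sort S (fun j => if j = k then A i j else 0)]
    simp
  · rw [← submatrix_mul _ _ _ _ _ Function.bijective_id, one_mul]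

theorem continuous_eval_map_charpoly (z : ℂ) :
    Continuous fun M : Matrix m m ℝ => (M.charpoly.map (algebraMap ℝ ℂ)).eval z := by
  simp_rw [← charpoly_map, eval_charpoly]
  exact continuous_const.sub (continuous_id.matrix_map Complex.continuous_ofReal) |>.matrix_det

end Matrix

section HurwitzUnstable

variable {m : Type*} [Fintype m] [DecidableEq m]

theorem HurwitzUnstable.of_norm_eval_lt {M : Matrix m m ℝ} {z : ℂ} (hz : 0 < z.re)
    (h : ‖(M.charpoly.map (algebraMap ℝ ℂ)).eval z‖ < z.re ^ Fintype.card m) :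
    HurwitzUnstable M := by
  by_contra hM
  have hmonic := M.charpoly_monic.map (algebraMap ℝ ℂ)
  have hroots (r : ℂ) (hr : r ∈ (M.charpoly.map (algebraMap ℝ ℂ)).roots) : r.re ≤ 0 :=
    not_lt.mp fun hr' => hM ⟨r, (mem_roots hmonic.ne_zero).mp hr, hr'⟩
  have hle := re_pow_natDegree_le_norm_eval hmonic hroots hz.le
  rw [natDegree_map, charpoly_natDegree_eq_dim] at hle
  exact h.not_ge hle

theorem isOpen_setOf_hurwitzUnstable : IsOpen {M : Matrix m m ℝ | HurwitzUnstable M} := by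
  refine isOpen_iff_mem_nhds.mpr fun M₀ ⟨z, hroot, hz⟩ => ?_
  have hlim : Tendsto (fun M => ‖(M.charpoly.map (algebraMap ℝ ℂ)).eval z‖) (𝓝 M₀) (𝓝 0) := by
    simpa [hroot.eq_zero] using ((continuous_eval_map_charpoly z).tendsto M₀).norm
  filter_upwards [hlim.eventually_lt_const (pow_pos hz _)] with M hM
  exact HurwitzUnstable.of_norm_eval_lt hz hM

theorem HurwitzUnstable.mul_diagonal_indicator {A : Matrix m m ℝ} {S : Finset m}
    (h : HurwitzUnstable (A.submatrix ((↑) : S → m) (↑))) :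
    HurwitzUnstable (A * diagonal fun i => if i ∈ S then 1 else 0) := by
  obtain ⟨z, hroot, hz⟩ := h
  refine ⟨z, ?_, hz⟩
  have key := congr_arg (fun p => (p.map (algebraMap ℝ ℂ)).eval z)
    (X_pow_card_mul_charpoly_mul_diagonal_indicator A S)
  simp only [Polynomial.map_mul, Polynomial.map_pow, map_X, eval_mul, eval_pow, eval_X,
    hroot.eq_zero, mul_zero] at key
  exact (mul_eq_zero.mp key).resolve_left (pow_ne_zero _ fun h0 => by simp [h0] at hz)

end HurwitzUnstable

theorem hurwitz_unstable_principal_submatrix_D_unstable_general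
    {n : Type*} [Fintype n] [DecidableEq n] (A : Matrix n n ℝ)
    (S : Finset n)
    (hsub : HurwitzUnstable (A.submatrix (fun i : S => (i : n)) (fun j : S => (j : n)))) :
    ∃ d : n → ℝ, (∀ i, 0 < d i) ∧ HurwitzUnstable (A * Matrix.diagonal d) := by
  let d : ℝ → n → ℝ := fun ε i => if i ∈ S then 1 else ε
  have hd : Continuous fun ε => A * diagonal (d ε) :=
    continuous_const.matrix_mul <| Continuous.matrix_diagonal <| continuous_pi fun i =>
      continuous_const.if_const _ continuous_id
  have hev : ∀ᶠ ε in 𝓝[>] 0, HurwitzUnstable (A * diagonal (d ε)) :=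
    nhdsWithin_le_nhds <| hd.tendsto 0 <|
      isOpen_setOf_hurwitzUnstable.mem_nhds hsub.mul_diagonal_indicator
  obtain ⟨ε, hε, hε0⟩ := (hev.and self_mem_nhdsWithin).exists
  refine ⟨d ε, fun i => ?_, hε⟩
  by_cases hi : i ∈ S <;> simp [d, hi, hε0]

/-- A matrix with a Hurwitz-unstable principal submatrix is `D`-unstable: there is a
positive diagonal scaling `D` such that `A · D` is Hurwitz-unstable. -/
theorem hurwitz_unstable_principal_submatrix_D_unstable
    {n : Type*} [Fintype n] [DecidableEq n] (A : Matrix n n ℝ)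
    (S : Finset n) (hS : S.Nonempty)
    (hsub : HurwitzUnstable (A.submatrix (fun i : S => (i : n)) (fun j : S => (j : n)))) :
    ∃ d : n → ℝ, (∀ i, 0 < d i) ∧ HurwitzUnstable (A * Matrix.diagonal d) :=
  hurwitz_unstable_principal_submatrix_D_unstable_general A S hsub
end

section
/- Let X and R be finite types and Adj : (X ⊕ R) → (X ⊕ R) → Prop a directed-graph relation that is bipartite (¬Adj (Sum.inl x) (Sum.inl x') and ¬Adj (Sum.inr r) (Sum.inr r') for all x, x', r, r') and satisfies: every x ∈ X has exactly one out-neighbour (∀ x, ∃! r, Adj (Sum.inl x) (Sum.inr r)) and every r ∈ R has exactly one in-neighbour (∀ r, ∃! x, Adj (Sum.inl x) (Sum.inr r)). If the graph is strongly connected (∀ u v, Relation.ReflTransGen Adj u v), then it has no cut vertex: for every vertex v₀ and all vertices a, b distinct from v₀, Relation.ReflTransGen (fun u w => u ≠ v₀ ∧ w ≠ v₀ ∧ (Adj u w ∨ Adj w u)) a b holds. -/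
/-!
Follow a directed walk from `a` to `b` given by strong connectivity. Each passage `u → v₀ → w`
through the deleted vertex is replaced by a directed walk from `w` back to `u` that avoids `v₀`,
traversed backwards. Such a walk exists because `v₀` has a unique in-neighbour (a reaction) or a
unique out-neighbour (a species): in the first case a walk from `w` to `u` can be cut at its first
visit to `v₀`, which is immediately preceded by `u`; in the second case it can be restarted after
its last visit to `v₀`, which is immediately followed by `w`.
-/

namespace Relation

variable {α : Type*} {r : α → α → Prop}

def avoiding (r : α → α → Prop) (v : α) : α → α → Prop :=
  fun p q => p ≠ v ∧ q ≠ v ∧ r p q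

theorem reflTransGen_of_bypass {t : α → α → Prop} {v a b : α}
    (hstep : ∀ u w, u ≠ v → w ≠ v → r u w → ReflTransGen t u w)
    (hbypass : ∀ u w, u ≠ v → w ≠ v → r u v → r v w → ReflTransGen t u w)
    (hab : ReflTransGen r a b) (ha : a ≠ v) (hb : b ≠ v) : ReflTransGen t a b := by
  suffices ∀ q, ReflTransGen r a q →
      (q ≠ v → ReflTransGen t a q) ∧ (q = v → ∃ u ≠ v, r u v ∧ ReflTransGen t a u) from
    (this b hab).1 hb
  intro q haq
  induction haq with
  | refl => exact ⟨fun _ => .refl, fun h => absurd h ha⟩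
  | @tail p q _ hpq ih =>
    rcases eq_or_ne p v with rfl | hp
    · obtain ⟨u, hu, hup, hau⟩ := ih.2 rfl
      exact ⟨fun hq => hau.trans (hbypass u q hu hq hup hpq), fun _ => ⟨u, hu, hup, hau⟩⟩
    · exact ⟨fun hq => (ih.1 hp).trans (hstep p q hp hq hpq),
        fun hq => ⟨p, hp, hq ▸ hpq, ih.1 hp⟩⟩

theorem reflTransGen_avoiding_of_unique_pred {u v w : α} (hpred : ∀ p, r p v → p = u)
    (hw : w ≠ v) (h : ReflTransGen r w u) : ReflTransGen (avoiding r v) w u := by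
  induction h using ReflTransGen.head_induction_on with
  | refl => exact .refl
  | @head p c hpc _ ih =>
    by_cases hc : c = v
    · exact hpred p (hc ▸ hpc) ▸ .refl
    · exact (ih hc).head ⟨hw, hc, hpc⟩

theorem reflTransGen_avoiding_of_unique_succ {u v w : α} (hsucc : ∀ q, r v q → q = w)
    (hu : u ≠ v) (h : ReflTransGen r w u) : ReflTransGen (avoiding r v) w u := by
  have hswap := reflTransGen_avoiding_of_unique_pred (r := Function.swap r) hsucc hu
    (reflTransGen_swap.mpr h)
  exact reflTransGen_swap.mp (ReflTransGen.mono (fun _ _ ⟨hx, hy, hxy⟩ => ⟨hy, hx, hxy⟩) _ _ hswap)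

theorem reflTransGen_avoiding_symmGen
    (hdeg : ∀ v, {p | r p v}.Subsingleton ∨ {q | r v q}.Subsingleton)
    (hsc : ∀ a b, ReflTransGen r a b) {v a b : α} (ha : a ≠ v) (hb : b ≠ v) :
    ReflTransGen (avoiding (SymmGen r) v) a b := by
  refine reflTransGen_of_bypass (fun u w hu hw h => .single ⟨hu, hw, .of_rel h⟩)
    (fun u w hu hw huv hvw => ?_) (hsc a b) ha hb
  have hwu : ReflTransGen (avoiding r v) w u := by
    rcases hdeg v with hin | hout
    · exact reflTransGen_avoiding_of_unique_pred (fun p hp => hin hp huv) hw (hsc w u)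
    · exact reflTransGen_avoiding_of_unique_succ (fun q hq => hout hq hvw) hu (hsc w u)
  exact reflTransGen_swap.mp
    (ReflTransGen.mono (fun _ _ ⟨hx, hy, hxy⟩ => ⟨hy, hx, .of_rel_symm hxy⟩) _ _ hwu)

end Relation

theorem Sum.subsingleton_pred_or_succ_of_bipartite {X R : Type*}
    {Adj : (X ⊕ R) → (X ⊕ R) → Prop}
    (hbipXX : ∀ x x' : X, ¬ Adj (Sum.inl x) (Sum.inl x'))
    (hbipRR : ∀ r r' : R, ¬ Adj (Sum.inr r) (Sum.inr r'))
    (hout : ∀ x : X, {r : R | Adj (Sum.inl x) (Sum.inr r)}.Subsingleton)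
    (hin : ∀ r : R, {x : X | Adj (Sum.inl x) (Sum.inr r)}.Subsingleton) (v : X ⊕ R) :
    {p | Adj p v}.Subsingleton ∨ {q | Adj v q}.Subsingleton := by
  rcases v with x | r
  · right
    rintro (x₁ | r₁) h₁ (x₂ | r₂) h₂
    all_goals first
      | exact absurd h₁ (hbipXX _ _) | exact absurd h₂ (hbipXX _ _)
      | exact congrArg Sum.inr (hout x h₁ h₂)
  · left
    rintro (x₁ | r₁) h₁ (x₂ | r₂) h₂
    all_goals first
      | exact absurd h₁ (hbipRR _ _) | exact absurd h₂ (hbipRR _ _)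
      | exact congrArg Sum.inl (hin r h₁ h₂)

theorem childSelective_strongly_connected_no_cut_vertex_general
    {X R : Type*}
    (Adj : (X ⊕ R) → (X ⊕ R) → Prop)
    (hbipXX : ∀ x x' : X, ¬ Adj (Sum.inl x) (Sum.inl x'))
    (hbipRR : ∀ r r' : R, ¬ Adj (Sum.inr r) (Sum.inr r'))
    (hout : ∀ x : X, ∃! r : R, Adj (Sum.inl x) (Sum.inr r))
    (hin : ∀ r : R, ∃! x : X, Adj (Sum.inl x) (Sum.inr r))
    (hsc : ∀ u v : X ⊕ R, Relation.ReflTransGen Adj u v) :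
    ∀ v₀ a b : X ⊕ R, a ≠ v₀ → b ≠ v₀ →
      Relation.ReflTransGen
        (fun u w => u ≠ v₀ ∧ w ≠ v₀ ∧ (Adj u w ∨ Adj w u)) a b := by
  intro v₀ a b ha hb
  have hdeg := Sum.subsingleton_pred_or_succ_of_bipartite hbipXX hbipRR
    (fun x _ h₁ _ h₂ => (hout x).unique h₁ h₂) (fun r _ h₁ _ h₂ => (hin r).unique h₁ h₂)
  exact Relation.reflTransGen_avoiding_symmGen hdeg hsc ha hb

/-- A strongly connected bipartite digraph in which every species vertex has exactly
one out-neighbour and every reaction vertex has exactly one in-neighbour has no cut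
vertex: after deleting any single vertex, any two remaining vertices are joined by
a walk in the symmetrized edge relation avoiding the deleted vertex. -/
theorem childSelective_strongly_connected_no_cut_vertex
    {X R : Type*} [Fintype X] [Fintype R]
    (Adj : (X ⊕ R) → (X ⊕ R) → Prop)
    (hbipXX : ∀ x x' : X, ¬ Adj (Sum.inl x) (Sum.inl x'))
    (hbipRR : ∀ r r' : R, ¬ Adj (Sum.inr r) (Sum.inr r'))
    (hout : ∀ x : X, ∃! r : R, Adj (Sum.inl x) (Sum.inr r))
    (hin : ∀ r : R, ∃! x : X, Adj (Sum.inl x) (Sum.inr r))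
    (hsc : ∀ u v : X ⊕ R, Relation.ReflTransGen Adj u v) :
    ∀ v₀ a b : X ⊕ R, a ≠ v₀ → b ≠ v₀ →
      Relation.ReflTransGen
        (fun u w => u ≠ v₀ ∧ w ≠ v₀ ∧ (Adj u w ∨ Adj w u)) a b :=
  childSelective_strongly_connected_no_cut_vertex_general Adj hbipXX hbipRR hout hin hsc
end

section
/- Let X and R be finite types, and let s⁺, s⁻ : X → R → ℝ take only nonnegative values with no explicit catalysis: s⁺ x r · s⁻ x r = 0 for all x, r. Let κ : X ≃ R satisfy 0 < s⁻ x (κ x) for every x (a Child-Selection), and define the CS matrix A : Matrix X X ℝ by A x w = s⁺ x (κ w) − s⁻ x (κ w). Then A is autocatalytic if and only if both of the following hold: (1) there is a vector v : X → ℝ with all entries strictly positive such that every entry of A·v is strictly positive; (2) the König graph of the Child-Selection has no source and no sink vertices, i.e., for every x ∈ X there exists w with 0 < s⁺ x (κ w), and for every w ∈ X there exists y with 0 < s⁺ y (κ w). -/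
theorem Matrix.exists_pos_of_mulVec_pos {α n m : Type*} [Fintype m] [Semiring α] [LinearOrder α]
    [IsOrderedRing α] {A : Matrix n m α} {v : m → α} (hv : ∀ j, 0 ≤ v j) {i : n}
    (h : 0 < A.mulVec v i) : ∃ j, 0 < A i j := by
  by_contra! hrow
  have : A.mulVec v i ≤ 0 :=
    Finset.sum_nonpos fun j _ => mul_nonpos_of_nonpos_of_nonneg (hrow j) (hv j)
  exact this.not_gt h

theorem isAutocatalytic_iff_of_forall_exists_neg {n m : Type*} [Fintype m] {A : Matrix n m ℝ}
    (hneg : ∀ j, ∃ i, A i j < 0) :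
    IsAutocatalytic A ↔
      (∃ v : m → ℝ, (∀ j, 0 < v j) ∧ ∀ i, 0 < A.mulVec v i) ∧
        (∀ i, ∃ j, 0 < A i j) ∧ ∀ j, ∃ i, 0 < A i j := by
  constructor
  · rintro ⟨⟨v, hv, hAv⟩, hcol⟩
    exact ⟨⟨v, hv, hAv⟩, fun i => A.exists_pos_of_mulVec_pos (fun j => (hv j).le) (hAv i),
      fun j => (hcol j).2⟩
  · rintro ⟨hvec, -, hcol⟩
    exact ⟨hvec, fun j => ⟨hneg j, hcol j⟩⟩

theorem sub_pos_iff_pos_of_mul_eq_zero {α : Type*} [Ring α] [LinearOrder α] [IsStrictOrderedRing α]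
    {a b : α} (hb : 0 ≤ b) (hab : a * b = 0) : 0 < a - b ↔ 0 < a := by
  refine ⟨fun h => lt_of_le_of_lt hb (sub_pos.1 h), fun ha => ?_⟩
  rwa [(mul_eq_zero.1 hab).resolve_left ha.ne', sub_zero]

theorem cs_autocatalytic_iff_positive_vector_and_no_source_sink_general
    {X R : Type*} [Fintype X]
    (sp sm : X → R → ℝ)
    (hsm : ∀ x r, 0 ≤ sm x r)
    (hnocat : ∀ x r, sp x r * sm x r = 0)
    (κ : X ≃ R) (hκ : ∀ x, 0 < sm x (κ x))
    (A : Matrix X X ℝ) (hA : ∀ x w, A x w = sp x (κ w) - sm x (κ w)) :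
    IsAutocatalytic A ↔
      ((∃ v : X → ℝ, (∀ j, 0 < v j) ∧ ∀ i, 0 < A.mulVec v i) ∧
       (∀ x : X, ∃ w : X, 0 < sp x (κ w)) ∧
       (∀ w : X, ∃ y : X, 0 < sp y (κ w))) := by
  have hpos : ∀ x w, 0 < A x w ↔ 0 < sp x (κ w) := fun x w => by
    rw [hA]
    exact sub_pos_iff_pos_of_mul_eq_zero (hsm x _) (hnocat x _)
  -- The diagonal entry of column `w` is `-sm w (κ w)`, since `w` is a reactant of `κ w`.
  have hdiag : ∀ w, A w w < 0 := fun w => by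
    rw [hA, (mul_eq_zero.1 (hnocat w (κ w))).resolve_right (hκ w).ne', zero_sub]
    exact neg_neg_of_pos (hκ w)
  rw [isAutocatalytic_iff_of_forall_exists_neg fun w => ⟨w, hdiag w⟩]
  simp only [hpos]

/-- The CS matrix of a Child-Selection is autocatalytic if and only if there is a
strictly positive vector with strictly positive image and the König graph of the
Child-Selection has neither source nor sink vertices. -/
theorem cs_autocatalytic_iff_positive_vector_and_no_source_sink
    {X R : Type*} [Fintype X] [Fintype R]
    (sp sm : X → R → ℝ)
    (hsp : ∀ x r, 0 ≤ sp x r) (hsm : ∀ x r, 0 ≤ sm x r)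
    (hnocat : ∀ x r, sp x r * sm x r = 0)
    (κ : X ≃ R) (hκ : ∀ x, 0 < sm x (κ x))
    (A : Matrix X X ℝ) (hA : ∀ x w, A x w = sp x (κ w) - sm x (κ w)) :
    IsAutocatalytic A ↔
      ((∃ v : X → ℝ, (∀ j, 0 < v j) ∧ ∀ i, 0 < A.mulVec v i) ∧
       (∀ x : X, ∃ w : X, 0 < sp x (κ w)) ∧
       (∀ w : X, ∃ y : X, 0 < sp y (κ w))) :=
  cs_autocatalytic_iff_positive_vector_and_no_source_sink_general sp sm hsm hnocat κ hκ A hA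
end

section
/- Let X and R be finite types and Adj : (X ⊕ R) → (X ⊕ R) → Prop a bipartite directed-graph relation (¬Adj (Sum.inl x) (Sum.inl x') and ¬Adj (Sum.inr r) (Sum.inr r')) such that every x ∈ X has exactly one out-neighbour (∀ x, ∃! r, Adj (Sum.inl x) (Sum.inr r)) and every r ∈ R has exactly one in-neighbour (∀ r, ∃! x, Adj (Sum.inl x) (Sum.inr r)). Let V' be a subset of X ⊕ R with at least two elements and Adj' a relation with Adj' u w → Adj u w ∧ u ∈ V' ∧ w ∈ V', and suppose the subgraph (V', Adj') is strongly connected: for all u, v ∈ V', Relation.ReflTransGen Adj' u v. Then: every x with Sum.inl x ∈ V' has exactly one r with Adj' (Sum.inl x) (Sum.inr r); every r with Sum.inr r ∈ V' has exactly one x with Adj' (Sum.inl x) (Sum.inr r); and the sets {x | Sum.inl x ∈ V'} and {r | Sum.inr r ∈ V'} have the same cardinality. -/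
/-!
Strong connectivity of the subgraph on at least two vertices forces every vertex of `V'` to have
an out- and an in-neighbour in the subgraph, and bipartiteness makes these neighbours of the
other kind. Since the subgraph's edges are edges of the fluffle, they are unique, so the edges
of the subgraph from species to reactions form a perfect matching between the species and the
reactions of `V'`.
-/

namespace Relation

variable {α : Type*} {r : α → α → Prop} {a b : α}

theorem ReflTransGen.exists_rel_left (h : ReflTransGen r a b) (hab : a ≠ b) : ∃ c, r a c := by
  rcases h.cases_head with rfl | ⟨c, hac, -⟩
  · exact absurd rfl hab
  · exact ⟨c, hac⟩

theorem ReflTransGen.exists_rel_right (h : ReflTransGen r a b) (hab : a ≠ b) : ∃ c, r c b := by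
  rcases h.cases_tail with rfl | ⟨c, -, hcb⟩
  · exact absurd rfl hab
  · exact ⟨c, hcb⟩

variable {s : Set α}

theorem exists_rel_left_of_mem_of_nontrivial (hs : s.Nontrivial)
    (hsc : ∀ u ∈ s, ∀ v ∈ s, ReflTransGen r u v) (ha : a ∈ s) : ∃ c, r a c := by
  obtain ⟨b, hb, hba⟩ := hs.exists_ne a
  exact (hsc a ha b hb).exists_rel_left hba.symm

theorem exists_rel_right_of_mem_of_nontrivial (hs : s.Nontrivial)
    (hsc : ∀ u ∈ s, ∀ v ∈ s, ReflTransGen r u v) (hb : b ∈ s) : ∃ c, r c b := by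
  obtain ⟨a, ha, hab⟩ := hs.exists_ne b
  exact (hsc a ha b hb).exists_rel_right hab

end Relation

theorem Set.ncard_eq_of_existsUnique {α β : Type*} {s : Set α} {t : Set β} {p : α → β → Prop}
    (hs : ∀ a ∈ s, ∃! b, p a b) (ht : ∀ b ∈ t, ∃! a, p a b)
    (hp : ∀ a b, p a b → a ∈ s ∧ b ∈ t) : s.ncard = t.ncard := by
  choose f hf using hs
  refine Set.ncard_congr f (fun a ha ↦ (hp _ _ (hf a ha).1).2) (fun a a' ha ha' hfa ↦ ?_)
    fun b hb ↦ ?_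
  · have hb : f a ha ∈ t := (hp _ _ (hf a ha).1).2
    exact (ht _ hb).unique (hf a ha).1 (hfa ▸ (hf a' ha').1)
  · obtain ⟨a, hab, -⟩ := ht b hb
    exact ⟨a, (hp a b hab).1, ((hf a _).2 b hab).symm⟩

theorem strong_subgraph_of_fluffle_is_fluffle_general
    {X R : Type*}
    (Adj Adj' : (X ⊕ R) → (X ⊕ R) → Prop)
    (hbipXX : ∀ x x' : X, ¬ Adj (Sum.inl x) (Sum.inl x'))
    (hbipRR : ∀ r r' : R, ¬ Adj (Sum.inr r) (Sum.inr r'))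
    (hout : ∀ x : X, ∃! r : R, Adj (Sum.inl x) (Sum.inr r))
    (hin : ∀ r : R, ∃! x : X, Adj (Sum.inl x) (Sum.inr r))
    (V' : Set (X ⊕ R)) (hV' : V'.Nontrivial)
    (hsub : ∀ u w, Adj' u w → Adj u w ∧ u ∈ V' ∧ w ∈ V')
    (hsc : ∀ u ∈ V', ∀ v ∈ V', Relation.ReflTransGen Adj' u v) :
    (∀ x : X, Sum.inl x ∈ V' → ∃! r : R, Adj' (Sum.inl x) (Sum.inr r)) ∧
    (∀ r : R, Sum.inr r ∈ V' → ∃! x : X, Adj' (Sum.inl x) (Sum.inr r)) ∧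
    {x : X | Sum.inl x ∈ V'}.ncard = {r : R | Sum.inr r ∈ V'}.ncard := by
  have exists_out : ∀ x, Sum.inl x ∈ V' → ∃ r, Adj' (Sum.inl x) (Sum.inr r) := by
    intro x hx
    obtain ⟨x' | r, hxw⟩ := Relation.exists_rel_left_of_mem_of_nontrivial hV' hsc hx
    · exact absurd (hsub _ _ hxw).1 (hbipXX x x')
    · exact ⟨r, hxw⟩
  have exists_in : ∀ r, Sum.inr r ∈ V' → ∃ x, Adj' (Sum.inl x) (Sum.inr r) := by
    intro r hr
    obtain ⟨x | r', hwr⟩ := Relation.exists_rel_right_of_mem_of_nontrivial hV' hsc hr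
    · exact ⟨x, hwr⟩
    · exact absurd (hsub _ _ hwr).1 (hbipRR r' r)
  have unique_out : ∀ x, Sum.inl x ∈ V' → ∃! r, Adj' (Sum.inl x) (Sum.inr r) :=
    fun x hx ↦ existsUnique_of_exists_of_unique (exists_out x hx) fun _ _ h h' ↦
      (hout x).unique (hsub _ _ h).1 (hsub _ _ h').1
  have unique_in : ∀ r, Sum.inr r ∈ V' → ∃! x, Adj' (Sum.inl x) (Sum.inr r) :=
    fun r hr ↦ existsUnique_of_exists_of_unique (exists_in r hr) fun _ _ h h' ↦
      (hin r).unique (hsub _ _ h).1 (hsub _ _ h').1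
  exact ⟨unique_out, unique_in, Set.ncard_eq_of_existsUnique unique_out unique_in
    fun _ _ h ↦ (hsub _ _ h).2⟩

/-- A strongly connected subgraph (on at least two vertices) of a bipartite digraph in
which every species vertex has exactly one out-neighbour and every reaction vertex
has exactly one in-neighbour inherits the degree conditions and has equally many
species and reaction vertices. -/
theorem strong_subgraph_of_fluffle_is_fluffle
    {X R : Type*} [Fintype X] [Fintype R]
    (Adj Adj' : (X ⊕ R) → (X ⊕ R) → Prop)
    (hbipXX : ∀ x x' : X, ¬ Adj (Sum.inl x) (Sum.inl x'))
    (hbipRR : ∀ r r' : R, ¬ Adj (Sum.inr r) (Sum.inr r'))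
    (hout : ∀ x : X, ∃! r : R, Adj (Sum.inl x) (Sum.inr r))
    (hin : ∀ r : R, ∃! x : X, Adj (Sum.inl x) (Sum.inr r))
    (V' : Set (X ⊕ R)) (hV' : V'.Nontrivial)
    (hsub : ∀ u w, Adj' u w → Adj u w ∧ u ∈ V' ∧ w ∈ V')
    (hsc : ∀ u ∈ V', ∀ v ∈ V', Relation.ReflTransGen Adj' u v) :
    (∀ x : X, Sum.inl x ∈ V' → ∃! r : R, Adj' (Sum.inl x) (Sum.inr r)) ∧
    (∀ r : R, Sum.inr r ∈ V' → ∃! x : X, Adj' (Sum.inl x) (Sum.inr r)) ∧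
    {x : X | Sum.inl x ∈ V'}.ncard = {r : R | Sum.inr r ∈ V'}.ncard :=
  strong_subgraph_of_fluffle_is_fluffle_general Adj Adj' hbipXX hbipRR hout hin V' hV' hsub hsc
end
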